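/- Let μ > 0, σ > 0, M > 1, and ε ∈ (−1, 0), and suppose σ_in = σ_out = σ. Then the difference of expected activation movements E_out[z̄ − z] − E_in[z̄ − z] is strictly negative, where E_in[z̄−z] = μ[Φ(μ√M/σ) − Φ(μ/σ)] + σ[(1/√M)φ(μ√M/σ) − φ(−μ/σ)] and E_out[z̄−z] = (4εσ/√(2π))(1 − 1/√M) + (1+ε)μ[Φ(μ√M/((1+ε)σ)) − Φ(μ/((1+ε)σ))] + (1+ε)²σ[(1/√M)φ(μ√M/((1+ε)σ)) − φ(μ/((1+ε)σ))]. -/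

import Mathlib

open Real MeasureTheory

noncomputable def stdPdf (t : ℝ) : ℝ := Real.exp (-t^2/2) / Real.sqrt (2*Real.pi)

noncomputable def stdCdf (x : ℝ) : ℝ := ∫ t in Set.Iic x, stdPdf t

/-!
Write `R(μ, s) = μ Φ(μ/s) + s φ(μ/s)` for the mean of `max(X, 0)` with `X ~ N(μ, s²)` and
`k = 1 + ε`. The difference of movements is `W(σ/√M) - W(σ)` for
`W(v) = k R(μ, k v) - R(μ, v) + 4(1 - k) φ(0) v`. Since `∂R/∂s = φ(μ/s)`,
`W'(v) = k² φ(μ/(k v)) - φ(μ/v) + 4(1 - k) φ(0)`, and the Gaussian estimate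
`φ(x) - k² φ(x/k) ≤ (1 - k²) φ(0)` (from `e⁻ᵃ ≥ 1 - a` and `(1 + x²/2) φ(x) ≤ φ(0)`) gives
`W' ≥ (1 - k)(3 - k) φ(0) > 0`. As `σ/√M < σ`, the difference is negative.
-/

open Set

lemma stdPdf_pos (t : ℝ) : 0 < stdPdf t := by
  unfold stdPdf
  positivity

lemma stdPdf_zero : stdPdf 0 = 1 / Real.sqrt (2*Real.pi) := by
  simp [stdPdf]

lemma stdPdf_neg (t : ℝ) : stdPdf (-t) = stdPdf t := by
  simp [stdPdf]

lemma continuous_stdPdf : Continuous stdPdf := by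
  unfold stdPdf
  fun_prop

lemma integrable_stdPdf : Integrable stdPdf := by
  convert (integrable_exp_neg_mul_sq (b := 1/2) (by norm_num)).div_const (Real.sqrt (2*Real.pi))
    using 2 with t
  unfold stdPdf
  ring_nf

lemma hasDerivAt_stdCdf (x : ℝ) : HasDerivAt stdCdf (stdPdf x) x := by
  have hsplit : ∀ y, stdCdf y = stdCdf 0 + ∫ t in (0:ℝ)..y, stdPdf t := fun y => by
    rw [stdCdf, stdCdf, ← intervalIntegral.integral_Iic_sub_Iic integrable_stdPdf.integrableOn
      integrable_stdPdf.integrableOn]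
    ring
  rw [funext hsplit]
  exact (intervalIntegral.integral_hasDerivAt_right integrable_stdPdf.intervalIntegrable
    continuous_stdPdf.aestronglyMeasurable.stronglyMeasurableAtFilter
    continuous_stdPdf.continuousAt).const_add _

lemma hasDerivAt_stdPdf (x : ℝ) : HasDerivAt stdPdf (-x * stdPdf x) x := by
  have h : HasDerivAt (fun t : ℝ => -t^2/2) (-x) x := by
    simpa [neg_div] using (hasDerivAt_pow 2 x).neg.div_const 2
  exact (h.exp.div_const (Real.sqrt (2*Real.pi))).congr_deriv (by simp only [stdPdf]; ring)

lemma one_add_sq_div_two_mul_stdPdf_le (x : ℝ) : (1 + x^2/2) * stdPdf x ≤ stdPdf 0 := by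
  have h : (1 + x^2/2) * Real.exp (-x^2/2) ≤ 1 := by
    rw [neg_div, Real.exp_neg, ← div_eq_mul_inv, div_le_one (Real.exp_pos _)]
    linarith [Real.add_one_le_exp (x^2/2)]
  rw [stdPdf_zero, stdPdf, ← mul_div_assoc]
  gcongr

lemma stdPdf_mul_le_sq_mul_stdPdf_div (x : ℝ) {k : ℝ} (hk : k ≠ 0) :
    stdPdf x * (k^2 - x^2 * (1 - k^2) / 2) ≤ k^2 * stdPdf (x/k) := by
  have hexp : rexp (-x^2/2) * (k^2 - x^2 * (1 - k^2) / 2) ≤ k^2 * rexp (-(x/k)^2/2) :=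
    calc rexp (-x^2/2) * (k^2 - x^2 * (1 - k^2) / 2)
        = k^2 * (rexp (-x^2/2) * (-(x^2 * (1/k^2 - 1) / 2) + 1)) := by field_simp; ring
      _ ≤ k^2 * (rexp (-x^2/2) * rexp (-(x^2 * (1/k^2 - 1) / 2))) := by
        gcongr; exact add_one_le_exp _
      _ = k^2 * rexp (-(x/k)^2/2) := by rw [← exp_add]; ring_nf
  simp only [stdPdf, div_mul_eq_mul_div, mul_div_assoc']
  gcongr

lemma stdPdf_sub_sq_mul_stdPdf_div_le (x : ℝ) {k : ℝ} (hk0 : k ≠ 0) (hk : k^2 ≤ 1) :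
    stdPdf x - k^2 * stdPdf (x/k) ≤ (1 - k^2) * stdPdf 0 :=
  calc stdPdf x - k^2 * stdPdf (x/k)
      ≤ stdPdf x - stdPdf x * (k^2 - x^2 * (1 - k^2) / 2) := by
        linarith [stdPdf_mul_le_sq_mul_stdPdf_div x hk0]
    _ = (1 - k^2) * ((1 + x^2/2) * stdPdf x) := by ring
    _ ≤ (1 - k^2) * stdPdf 0 := by
        gcongr
        exact one_add_sq_div_two_mul_stdPdf_le x

/-- `E[max(X, 0)]` for `X ~ N(μ, s²)`, `s > 0`. -/
noncomputable def reluGaussMean (μ s : ℝ) : ℝ := μ * stdCdf (μ/s) + s * stdPdf (μ/s)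

lemma hasDerivAt_reluGaussMean (μ : ℝ) {s : ℝ} (hs : s ≠ 0) :
    HasDerivAt (reluGaussMean μ) (stdPdf (μ/s)) s := by
  have hdiv : HasDerivAt (fun s => μ/s) (-μ/s^2) s := by
    simpa [div_eq_mul_inv, neg_div] using (hasDerivAt_inv hs).const_mul μ
  have h := (((hasDerivAt_stdCdf _).comp s hdiv).const_mul μ).add
    ((hasDerivAt_id s).mul ((hasDerivAt_stdPdf _).comp s hdiv))
  refine h.congr_deriv ?_
  simp only [Function.comp_apply, id_eq]
  field_simp
  ring

lemma strictMonoOn_reluGaussMean_scale_gap (μ : ℝ) {k : ℝ} (hk0 : 0 < k) (hk1 : k < 1) :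
    StrictMonoOn (fun v => k * reluGaussMean μ (k*v) - reluGaussMean μ v + 4*(1-k)*stdPdf 0 * v)
      (Ioi 0) := by
  have hderiv : ∀ v ∈ Ioi (0:ℝ), HasDerivAt
      (fun v => k * reluGaussMean μ (k*v) - reluGaussMean μ v + 4*(1-k)*stdPdf 0 * v)
      (k^2 * stdPdf (μ/(k*v)) - stdPdf (μ/v) + 4*(1-k)*stdPdf 0) v := fun v hv => by
    have hv0 : v ≠ 0 := (mem_Ioi.1 hv).ne'
    have hscaled := (hasDerivAt_reluGaussMean μ (mul_ne_zero hk0.ne' hv0)).comp v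
      ((hasDerivAt_id v).const_mul k)
    refine (((hscaled.const_mul k).sub (hasDerivAt_reluGaussMean μ hv0)).add
      ((hasDerivAt_id v).const_mul _)).congr_deriv ?_
    ring
  refine strictMonoOn_of_deriv_pos (convex_Ioi 0)
    (fun v hv => (hderiv v hv).continuousAt.continuousWithinAt) fun v hv => ?_
  rw [interior_Ioi] at hv
  rw [(hderiv v hv).deriv]
  have hpdf := stdPdf_sub_sq_mul_stdPdf_div_le (μ/v) hk0.ne' (by nlinarith)
  rw [div_div, mul_comm v] at hpdf
  have : 0 < (1 - k) * (3 - k) * stdPdf 0 :=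
    mul_pos (mul_pos (by linarith) (by linarith)) (stdPdf_pos 0)
  linarith

theorem movement_difference_neg_general (μ σ ε : ℝ) (M : ℝ) (hσ : 0 < σ)
    (hM : 1 < M) (hε : ε ∈ Set.Ioo (-1 : ℝ) 0) :
    ((4*ε*σ/Real.sqrt (2*Real.pi)) * (1 - 1/Real.sqrt M)
      + (1+ε)*μ * (stdCdf (μ*Real.sqrt M/((1+ε)*σ)) - stdCdf (μ/((1+ε)*σ)))
      + (1+ε)^2*σ * ((1/Real.sqrt M) * stdPdf (μ*Real.sqrt M/((1+ε)*σ))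
          - stdPdf (μ/((1+ε)*σ))))
    - (μ * (stdCdf (μ*Real.sqrt M/σ) - stdCdf (μ/σ))
      + σ * ((1/Real.sqrt M) * stdPdf (μ*Real.sqrt M/σ) - stdPdf (-μ/σ))) < 0 := by
  obtain ⟨hε1, hε0⟩ := hε
  have hsqrt : 1 < Real.sqrt M := Real.lt_sqrt_of_sq_lt (by linarith)
  have hσM : 0 < σ / Real.sqrt M := by positivity
  have hgap := strictMonoOn_reluGaussMean_scale_gap μ (k := 1 + ε) (by linarith) (by linarith)
    hσM hσ (div_lt_self hσ hsqrt)
  refine lt_of_eq_of_lt ?_ (sub_neg.2 hgap)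
  have e1 : μ/((1+ε)*(σ/Real.sqrt M)) = μ*Real.sqrt M/((1+ε)*σ) := by field_simp
  have e2 : μ/(σ/Real.sqrt M) = μ*Real.sqrt M/σ := by field_simp
  simp only [reluGaussMean, e1, e2, neg_div, stdPdf_neg, stdPdf_zero]
  field_simp
  ring

theorem movement_difference_neg (μ σ ε : ℝ) (M : ℝ) (hμ : 0 < μ) (hσ : 0 < σ)
    (hM : 1 < M) (hε : ε ∈ Set.Ioo (-1 : ℝ) 0) :
    ((4*ε*σ/Real.sqrt (2*Real.pi)) * (1 - 1/Real.sqrt M)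
      + (1+ε)*μ * (stdCdf (μ*Real.sqrt M/((1+ε)*σ)) - stdCdf (μ/((1+ε)*σ)))
      + (1+ε)^2*σ * ((1/Real.sqrt M) * stdPdf (μ*Real.sqrt M/((1+ε)*σ))
          - stdPdf (μ/((1+ε)*σ))))
    - (μ * (stdCdf (μ*Real.sqrt M/σ) - stdCdf (μ/σ))
      + σ * ((1/Real.sqrt M) * stdPdf (μ*Real.sqrt M/σ) - stdPdf (-μ/σ))) < 0 :=
  movement_difference_neg_general μ σ ε M hσ hM hε
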